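/- arXiv:2511.14154 — 5 statements merged into one kernel-verified Lean document; each statement's English description precedes it below -/
import Mathlib

section
/- Let V be a (2n+1)-dimensional real vector space, ω a skew-symmetric bilinear form on V, and η a linear functional on V. Then ker η ∩ ker ω = {0} (where ker ω = {v : ω(v,·)=0}) if and only if the linear map v ↦ ω(v,·) + η(v)·η from V to V* is a linear isomorphism. -/
/-- For a (2n+1)-dimensional real vector space V with alternating
bilinear form ω and linear functional η, ker η ∩ ker ω = {0} iff the map
v ↦ ι_v ω + η(v)·η is a linear isomorphism (bijective linear map). -/
theorem almost_cosymplectic_kernel_iff_bijective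
    (n : ℕ) (V : Type*) [AddCommGroup V] [Module ℝ V] [FiniteDimensional ℝ V]
    (hdim : Module.finrank ℝ V = 2 * n + 1)
    (ω : V →ₗ[ℝ] V →ₗ[ℝ] ℝ) (hω : ∀ v, ω v v = 0)
    (η : V →ₗ[ℝ] ℝ) :
    (∀ v : V, η v = 0 → (∀ w, ω v w = 0) → v = 0) ↔
      Function.Bijective (ω + η.smulRight η) := by
  have key : ∀ v : V, (ω + η.smulRight η) v = 0 → η v = 0 ∧ ∀ w, ω v w = 0 := by
    intro v hv
    have h' : ∀ w, ω v w + η v * η w = 0 := by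
      intro w
      have := congrArg (fun f => f w) hv
      simpa [LinearMap.smulRight_apply, smul_eq_mul] using this
    have hη : η v = 0 := by
      have := h' v
      rw [hω v, zero_add] at this
      exact pow_eq_zero_iff (n := 2) (by norm_num) |>.mp (by rw [sq]; exact this)
    refine ⟨hη, fun w => ?_⟩
    have := h' w
    rw [hη, zero_mul, add_zero] at this
    exact this
  constructor
  · intro h
    have hinj : Function.Injective (ω + η.smulRight η) := by
      rw [← LinearMap.ker_eq_bot]
      rw [Submodule.eq_bot_iff]
      intro v hv
      obtain ⟨h1, h2⟩ := key v hv
      exact h v h1 h2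
    refine ⟨hinj, ?_⟩
    exact (LinearMap.injective_iff_surjective_of_finrank_eq_finrank
      (Subspace.dual_finrank_eq (K := ℝ) (V := V)).symm).mp hinj
  · intro h v h1 h2
    apply h.injective
    rw [map_zero]
    ext w
    simp [LinearMap.smulRight_apply, h1, h2 w]
end

section
/- Let V be a (2n+1)-dimensional real vector space with alternating bilinear form ω and linear functional η such that ker η ∩ ker ω = {0}. Then the dual space V* decomposes as the direct sum of the image of the map v ↦ ι_v ω and the one-dimensional span of η. -/
/-!
An alternating form on an odd-dimensional space is degenerate, since its Gram matrix is
skew-symmetric of odd size; take `ξ ≠ 0` with `ι_ξ ω = 0`. Then `η ξ ≠ 0`, and every `ι_v ω`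
vanishes at `ξ`, so no nonzero multiple of `η` lies in the range of `ω`. On the other hand
`v ↦ ι_v ω + η(v) η` is injective (evaluate at `v` to get `η(v)² = 0`), hence onto `V*` by
dimension count, so the two subspaces span `V*`.
-/

open Module LinearMap
open scoped Matrix

theorem Matrix.det_eq_zero_of_transpose_eq_neg {K ι : Type*} [Field K] [NeZero (2 : K)]
    [Fintype ι] [DecidableEq ι] (hι : Odd (Fintype.card ι)) {A : Matrix ι ι K}
    (hA : Aᵀ = -A) : A.det = 0 := by
  have h := A.det_transpose
  rw [hA, Matrix.det_neg, hι.neg_one_pow, neg_one_mul] at h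
  have : (2 : K) * A.det = 0 := by linear_combination -h
  exact (mul_eq_zero.mp this).resolve_left two_ne_zero

namespace LinearMap.IsAlt

variable {K V : Type*} [Field K] [AddCommGroup V] [Module K V] {ω : V →ₗ[K] V →ₗ[K] K}
  {η : V →ₗ[K] K}

theorem exists_ne_zero_eq_zero_of_odd_finrank [NeZero (2 : K)] [FiniteDimensional K V]
    (hω : ω.IsAlt) (hV : Odd (finrank K V)) : ∃ ξ : V, ξ ≠ 0 ∧ ω ξ = 0 := by
  by_contra! h
  have hnd : ω.Nondegenerate := BilinForm.Nondegenerate.ofSeparatingLeft fun v hv =>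
    by_contra fun hv0 => h v hv0 (LinearMap.ext hv)
  let b := finBasis K V
  refine (BilinForm.nondegenerate_iff_det_ne_zero b).mp hnd
    (Matrix.det_eq_zero_of_transpose_eq_neg (by simpa using hV) ?_)
  ext i j
  simp only [Matrix.transpose_apply, Matrix.neg_apply, BilinForm.toMatrix_apply]
  exact (hω.neg _ _).symm

theorem disjoint_range_span_of_apply_ne_zero (hω : ω.IsAlt) {ξ : V} (hξ : ω ξ = 0)
    (hηξ : η ξ ≠ 0) : Disjoint (range ω) (Submodule.span K {η}) := by
  rw [Submodule.disjoint_def]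
  rintro φ ⟨v, rfl⟩ hφ
  obtain ⟨c, hc⟩ := Submodule.mem_span_singleton.mp hφ
  have hvξ : ω v ξ = 0 := by rw [← hω.neg, hξ, zero_apply, neg_zero]
  have hc0 : c = 0 := by
    rw [← hc, smul_apply, smul_eq_mul] at hvξ
    exact (mul_eq_zero.mp hvξ).resolve_right hηξ
  rw [← hc, hc0, zero_smul]

theorem injective_add_smulRight (hω : ω.IsAlt) (hker : ∀ v, η v = 0 → ω v = 0 → v = 0) :
    Function.Injective (ω + η.smulRight η) := by
  rw [← ker_eq_bot, ker_eq_bot']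
  intro v hv
  have hv' : ∀ w, ω v w + η v * η w = 0 := fun w => by
    simpa [mul_comm] using congrArg (· w) hv
  have hηv : η v = 0 := by simpa [hω v] using hv' v
  exact hker v hηv (LinearMap.ext fun w => by simpa [hηv] using hv' w)

theorem codisjoint_range_span [FiniteDimensional K V] (hω : ω.IsAlt)
    (hker : ∀ v, η v = 0 → ω v = 0 → v = 0) :
    Codisjoint (range ω) (Submodule.span K {η}) := by
  have hsurj : Function.Surjective (ω + η.smulRight η) :=
    (injective_iff_surjective_of_finrank_eq_finrank Subspace.dual_finrank_eq.symm).mp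
      (hω.injective_add_smulRight hker)
  rw [codisjoint_iff, eq_top_iff]
  rintro φ -
  obtain ⟨v, rfl⟩ := hsurj φ
  exact Submodule.add_mem_sup (mem_range_self ω v)
    (Submodule.smul_mem _ _ (Submodule.mem_span_singleton_self η))

end LinearMap.IsAlt

/-- If ker η ∩ ker ω = {0}, the dual space decomposes as the
direct sum of the range of v ↦ ι_v ω and the span of η. -/
theorem dual_decomposition_almost_cosymplectic
    (n : ℕ) (V : Type*) [AddCommGroup V] [Module ℝ V] [FiniteDimensional ℝ V]
    (hdim : Module.finrank ℝ V = 2 * n + 1)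
    (ω : V →ₗ[ℝ] V →ₗ[ℝ] ℝ) (hω : ∀ v, ω v v = 0)
    (η : V →ₗ[ℝ] ℝ)
    (hker : ∀ v : V, η v = 0 → (∀ w, ω v w = 0) → v = 0) :
    IsCompl (LinearMap.range ω) (Submodule.span ℝ {η}) := by
  have halt : ω.IsAlt := hω
  have hker' : ∀ v, η v = 0 → ω v = 0 → v = 0 := fun v hηv hωv =>
    hker v hηv (LinearMap.congr_fun hωv)
  obtain ⟨ξ, hξ0, hξ⟩ :=
    halt.exists_ne_zero_eq_zero_of_odd_finrank (hdim ▸ odd_two_mul_add_one n)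
  exact ⟨halt.disjoint_range_span_of_apply_ne_zero hξ fun h => hξ0 (hker' ξ h hξ),
    halt.codisjoint_range_span hker'⟩
end

section
/- Let L : ℝ^{2n+1} → ℝ be smooth in variables (q,v,S) with ∂L/∂S nowhere zero, and let (q(t), v(t), S(t)) satisfy the thermodynamic Euler–Lagrange equations: dqⁱ/dt = vⁱ, d/dt(∂L/∂vⁱ) − ∂L/∂qⁱ = F^fr_i + F^ext_i, and (∂L/∂S)(dS/dt) = Σᵢ vⁱ F^fr_i. If X = Σ Xⁱ(q) ∂_{qⁱ} is a vector field on ℝⁿ such that along the curve Σᵢ Xⁱ ∂L/∂qⁱ + Σ_{i,j} vʲ (∂Xⁱ/∂qʲ) ∂L/∂vⁱ = −Σᵢ (F^fr_i + F^ext_i) Xⁱ, then the quantity Σᵢ Xⁱ(q(t)) (∂L/∂vⁱ)(q(t),v(t),S(t)) is constant in t. -/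
open scoped BigOperators

abbrev VelPhase (n : ℕ) := (Fin n → ℝ) × (Fin n → ℝ) × ℝ

/-- Noether's theorem for forced thermodynamic Lagrangian
systems: if X^C(L) = −(F^fr + F^ext)(X^C) along a solution of the
thermodynamic Euler–Lagrange equations, then X^V(L) = Σᵢ Xⁱ ∂L/∂vⁱ is
conserved. -/
theorem thermodynamic_Noether
    (n : ℕ) (L : VelPhase n → ℝ) (hL : ContDiff ℝ (⊤ : ℕ∞) L)
    (hLS : ∀ z : VelPhase n, fderiv ℝ L z (0, 0, 1) ≠ 0)
    (Ffr Fext : VelPhase n → Fin n → ℝ)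
    (q v : ℝ → Fin n → ℝ) (S : ℝ → ℝ) (hSdiff : Differentiable ℝ S)
    -- dqⁱ/dt = vⁱ
    (hq : ∀ t i, HasDerivAt (fun τ => q τ i) (v t i) t)
    -- d/dt(∂L/∂vⁱ) = ∂L/∂qⁱ + F^fr_i + F^ext_i
    (hEL : ∀ t i, HasDerivAt
      (fun τ => fderiv ℝ L (q τ, v τ, S τ) (0, Pi.single i 1, 0))
      (fderiv ℝ L (q t, v t, S t) (Pi.single i 1, 0, 0)
        + Ffr (q t, v t, S t) i + Fext (q t, v t, S t) i) t)
    -- (∂L/∂S) dS/dt = Σᵢ vⁱ F^fr_i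
    (hent : ∀ t, fderiv ℝ L (q t, v t, S t) (0, 0, 1) * deriv S t
      = ∑ i, v t i * Ffr (q t, v t, S t) i)
    (X : (Fin n → ℝ) → Fin n → ℝ) (hX : ∀ i, Differentiable ℝ (fun y => X y i))
    -- symmetry condition X^C(L) = −(F^fr+F^ext)(X^C) along the curve
    (hsym : ∀ t,
      (∑ i, X (q t) i * fderiv ℝ L (q t, v t, S t) (Pi.single i 1, 0, 0))
      + (∑ i, (∑ j, v t j * fderiv ℝ (fun y => X y i) (q t) (Pi.single j 1))
          * fderiv ℝ L (q t, v t, S t) (0, Pi.single i 1, 0))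
      = -∑ i, (Ffr (q t, v t, S t) i + Fext (q t, v t, S t) i) * X (q t) i) :
    ∀ t₁ t₂ : ℝ,
      (∑ i, X (q t₁) i * fderiv ℝ L (q t₁, v t₁, S t₁) (0, Pi.single i 1, 0))
      = ∑ i, X (q t₂) i * fderiv ℝ L (q t₂, v t₂, S t₂) (0, Pi.single i 1, 0) := by
  intro t₁ t₂
  set f : ℝ → ℝ := fun t =>
    ∑ i, X (q t) i * fderiv ℝ L (q t, v t, S t) (0, Pi.single i 1, 0) with hf
  -- derivative of q as a curve into ℝⁿ
  have hqcurve : ∀ t, HasDerivAt q (v t) t := by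
    intro t
    rw [hasDerivAt_pi]
    exact fun i => hq t i
  -- derivative of t ↦ X (q t) i
  have hXd : ∀ t i, HasDerivAt (fun τ => X (q τ) i)
      (∑ j, v t j * fderiv ℝ (fun y => X y i) (q t) (Pi.single j 1)) t := by
    intro t i
    have h1 : HasDerivAt (fun τ => X (q τ) i)
        (fderiv ℝ (fun y => X y i) (q t) (v t)) t :=
      ((hX i).differentiableAt.hasFDerivAt.comp_hasDerivAt t (hqcurve t))
    have hv : (v t) = ∑ j : Fin n, v t j • (Pi.single j 1 : Fin n → ℝ) := by
      funext k
      simp [Finset.sum_apply, Pi.single_apply]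
    have : fderiv ℝ (fun y => X y i) (q t) (v t)
        = ∑ j, v t j * fderiv ℝ (fun y => X y i) (q t) (Pi.single j 1) := by
      conv_lhs => rw [hv]
      rw [map_sum]
      simp [ContinuousLinearMap.map_smul]
    rwa [this] at h1
  -- f has derivative 0 everywhere
  have hf0 : ∀ t, HasDerivAt f 0 t := by
    intro t
    have hterm : ∀ i : Fin n, HasDerivAt
        (fun τ => X (q τ) i * fderiv ℝ L (q τ, v τ, S τ) (0, Pi.single i 1, 0))
        ((∑ j, v t j * fderiv ℝ (fun y => X y i) (q t) (Pi.single j 1))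
            * fderiv ℝ L (q t, v t, S t) (0, Pi.single i 1, 0)
          + X (q t) i * (fderiv ℝ L (q t, v t, S t) (Pi.single i 1, 0, 0)
            + Ffr (q t, v t, S t) i + Fext (q t, v t, S t) i)) t :=
      fun i => (hXd t i).mul (hEL t i)
    have hsum := HasDerivAt.sum (u := Finset.univ) (fun i _ => hterm i)
    have heq : (∑ i,
        ((∑ j, v t j * fderiv ℝ (fun y => X y i) (q t) (Pi.single j 1))
            * fderiv ℝ L (q t, v t, S t) (0, Pi.single i 1, 0)
          + X (q t) i * (fderiv ℝ L (q t, v t, S t) (Pi.single i 1, 0, 0)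
            + Ffr (q t, v t, S t) i + Fext (q t, v t, S t) i))) = 0 := by
      have h := hsym t
      rw [Finset.sum_add_distrib]
      have : ∀ i : Fin n, X (q t) i * (fderiv ℝ L (q t, v t, S t) (Pi.single i 1, 0, 0)
            + Ffr (q t, v t, S t) i + Fext (q t, v t, S t) i)
          = X (q t) i * fderiv ℝ L (q t, v t, S t) (Pi.single i 1, 0, 0)
            + (Ffr (q t, v t, S t) i + Fext (q t, v t, S t) i) * X (q t) i := by
        intro i; ring
      rw [Finset.sum_congr rfl (fun i _ => this i), Finset.sum_add_distrib]
      rw [← neg_eq_iff_eq_neg] at h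
      linarith [h]
    rw [heq] at hsum
    have hfe : (∑ i : Fin n, fun τ => X (q τ) i * fderiv ℝ L (q τ, v τ, S τ) (0, Pi.single i 1, 0)) = f := by
      funext τ
      simp [hf, Finset.sum_apply]
    rw [hfe] at hsum
    exact hsum
  have : f t₁ = f t₂ := by
    have hmono : ∀ a b : ℝ, f a = f b := by
      have hd : Differentiable ℝ f := fun t => (hf0 t).differentiableAt
      have hz : ∀ t, deriv f t = 0 := fun t => (hf0 t).deriv
      intro a b
      have := is_const_of_deriv_eq_zero hd hz a b
      exact this
    exact hmono t₁ t₂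
  exact this
end

section
/- Let L_d : ℝⁿ × ℝⁿ × ℝ → ℝ be smooth with D_S L_d nowhere zero, and let f^{fr,±}_d be smooth ℝⁿ-valued (covector) functions on ℝⁿ × ℝⁿ × ℝ. Define 𝔽⁺(q₀,q₁,S₀) = (q₁, D₂L_d + ½f^{fr,+}_d, S₀ + (f^{fr,+}_d·q₁ − f^{fr,-}_d·q₀)/(D_S L_d)) and 𝔽⁻(q₀,q₁,S₀) = (q₀, −D₁L_d − ½f^{fr,-}_d, S₀). Then a sequence (q_k, S_k), k = 0,…,N, satisfies the discrete thermodynamic Euler–Lagrange equations (namely D₁L_d(q_k,q_{k+1},S_k) + ½f^{fr,-}_d(q_k,q_{k+1},S_k) + D₂L_d(q_{k-1},q_k,S_{k-1}) + ½f^{fr,+}_d(q_{k-1},q_k,S_{k-1}) = 0 and S_k = S_{k-1} + (f^{fr,+}_d(q_{k-1},q_k,S_{k-1})·q_k − f^{fr,-}_d(q_{k-1},q_k,S_{k-1})·q_{k-1})/D_S L_d(q_{k-1},q_k,S_{k-1})) if and only if 𝔽⁺(q_{k-1},q_k,S_{k-1}) = 𝔽⁻(q_k,q_{k+1},S_k)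 for all k = 1,…,N−1 together with the entropy update for k = N. -/
open scoped BigOperators

abbrev DiscSpace (n : ℕ) := (Fin n → ℝ) × (Fin n → ℝ) × ℝ

/-- i-th component of the gradient with respect to the first ℝⁿ argument. -/
noncomputable def D1 (n : ℕ) (L : DiscSpace n → ℝ) (z : DiscSpace n) (i : Fin n) : ℝ :=
  fderiv ℝ L z (Pi.single i 1, 0, 0)

/-- i-th component of the gradient with respect to the second ℝⁿ argument. -/
noncomputable def D2 (n : ℕ) (L : DiscSpace n → ℝ) (z : DiscSpace n) (i : Fin n) : ℝ :=
  fderiv ℝ L z (0, Pi.single i 1, 0)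

/-- Derivative with respect to the entropy argument. -/
noncomputable def DS (n : ℕ) (L : DiscSpace n → ℝ) (z : DiscSpace n) : ℝ :=
  fderiv ℝ L z (0, 0, 1)

/-- The discrete thermodynamic Legendre transform 𝔽⁺L_d. -/
noncomputable def Fplus (n : ℕ) (L : DiscSpace n → ℝ)
    (fp fm : DiscSpace n → Fin n → ℝ) (z : DiscSpace n) : DiscSpace n :=
  (z.2.1,
   fun i => D2 n L z i + (1/2) * fp z i,
   z.2.2 + (∑ i, fp z i * z.2.1 i - ∑ i, fm z i * z.1 i) / DS n L z)

/-- The discrete thermodynamic Legendre transform 𝔽⁻L_d. -/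
noncomputable def Fminus (n : ℕ) (L : DiscSpace n → ℝ)
    (fm : DiscSpace n → Fin n → ℝ) (z : DiscSpace n) : DiscSpace n :=
  (z.1, fun i => -(D1 n L z i) - (1/2) * fm z i, z.2.2)

/-- A discrete path solves the discrete thermodynamic
Euler–Lagrange equations iff the momentum matching equations
𝔽⁺L_d(q_{k-1},q_k,S_{k-1}) = 𝔽⁻L_d(q_k,q_{k+1},S_k) hold for k = 1,…,N−1
together with the entropy update at k = N. -/
theorem discrete_EL_iff_momentum_matching
    (n N : ℕ) (hN : 1 ≤ N)
    (L : DiscSpace n → ℝ) (hL : ContDiff ℝ (⊤ : ℕ∞) L)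
    (hDS : ∀ z, DS n L z ≠ 0)
    (fp fm : DiscSpace n → Fin n → ℝ)
    (q : ℕ → Fin n → ℝ) (S : ℕ → ℝ) :
    ((∀ k, 1 ≤ k → k ≤ N - 1 → ∀ i,
        D1 n L (q k, q (k+1), S k) i + (1/2) * fm (q k, q (k+1), S k) i
        + D2 n L (q (k-1), q k, S (k-1)) i
        + (1/2) * fp (q (k-1), q k, S (k-1)) i = 0) ∧
     (∀ k, 1 ≤ k → k ≤ N →
        S k = S (k-1)
          + (∑ i, fp (q (k-1), q k, S (k-1)) i * q k i
             - ∑ i, fm (q (k-1), q k, S (k-1)) i * q (k-1) i)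
            / DS n L (q (k-1), q k, S (k-1))))
    ↔
    ((∀ k, 1 ≤ k → k ≤ N - 1 →
        Fplus n L fp fm (q (k-1), q k, S (k-1))
          = Fminus n L fm (q k, q (k+1), S k)) ∧
     S N = S (N-1)
       + (∑ i, fp (q (N-1), q N, S (N-1)) i * q N i
          - ∑ i, fm (q (N-1), q N, S (N-1)) i * q (N-1) i)
         / DS n L (q (N-1), q N, S (N-1))) := by
  constructor
  · rintro ⟨hEL, hS⟩
    refine ⟨fun k hk1 hk2 => ?_, hS N hN le_rfl⟩
    have hS' := hS k hk1 (le_trans hk2 (Nat.sub_le N 1))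
    ext1
    · rfl
    ext1
    · funext i
      have := hEL k hk1 hk2 i
      simp only [Fplus, Fminus]
      linarith
    · simp only [Fplus, Fminus]
      exact hS'.symm
  · rintro ⟨hM, hSN⟩
    constructor
    · intro k hk1 hk2 i
      have h := congrArg (fun z => z.2.1 i) (hM k hk1 hk2)
      simp only [Fplus, Fminus] at h
      linarith
    · intro k hk1 hk2
      rcases eq_or_lt_of_le hk2 with h | h
      · subst h; exact hSN
      · have hk2' : k ≤ N - 1 := Nat.le_sub_one_of_lt h
        have h := congrArg (fun z => z.2.2) (hM k hk1 hk2')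
        simp only [Fplus, Fminus] at h
        exact h.symm
end

section
/- Suppose the discrete thermodynamic Legendre transform 𝔽⁻L_d is a bijection. Define Φ_d = (𝔽⁻L_d)⁻¹ ∘ 𝔽⁺L_d. Then a sequence (q_k, S_k)_{k=0}^N satisfies the discrete thermodynamic Euler–Lagrange equations for k = 1,…,N−1 if and only if Φ_d(q_{k-1}, q_k, S_{k-1}) = (q_k, q_{k+1}, S_k) for all k = 1,…,N−1. -/
open scoped BigOperators

/-- The discrete thermodynamic Lagrangian flow Φ_d = (𝔽⁻L_d)⁻¹ ∘ 𝔽⁺L_d. -/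
noncomputable def discreteFlow (n : ℕ) (L : DiscSpace n → ℝ)
    (fp fm : DiscSpace n → Fin n → ℝ) : DiscSpace n → DiscSpace n :=
  (Function.invFun (Fminus n L fm)) ∘ (Fplus n L fp fm)

/-- If 𝔽⁻L_d is a bijection, a discrete path solves the
discrete thermodynamic Euler–Lagrange equations for k = 1,…,N−1 iff
Φ_d(q_{k-1}, q_k, S_{k-1}) = (q_k, q_{k+1}, S_k) for all k = 1,…,N−1. -/
theorem discrete_EL_iff_flow
    (n N : ℕ)
    (L : DiscSpace n → ℝ) (hL : ContDiff ℝ (⊤ : ℕ∞) L)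
    (hDS : ∀ z, DS n L z ≠ 0)
    (fp fm : DiscSpace n → Fin n → ℝ)
    (hbij : Function.Bijective (Fminus n L fm))
    (q : ℕ → Fin n → ℝ) (S : ℕ → ℝ) :
    ((∀ k, 1 ≤ k → k ≤ N - 1 →
        (∀ i, D1 n L (q k, q (k+1), S k) i + (1/2) * fm (q k, q (k+1), S k) i
          + D2 n L (q (k-1), q k, S (k-1)) i
          + (1/2) * fp (q (k-1), q k, S (k-1)) i = 0) ∧
        S k = S (k-1)
          + (∑ i, fp (q (k-1), q k, S (k-1)) i * q k i
             - ∑ i, fm (q (k-1), q k, S (k-1)) i * q (k-1) i)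
            / DS n L (q (k-1), q k, S (k-1))))
    ↔
    (∀ k, 1 ≤ k → k ≤ N - 1 →
      discreteFlow n L fp fm (q (k-1), q k, S (k-1)) = (q k, q (k+1), S k)) := by
  have key : ∀ z w, discreteFlow n L fp fm z = w ↔ Fplus n L fp fm z = Fminus n L fm w := by
    intro z w
    unfold discreteFlow
    simp only [Function.comp_apply]
    constructor
    · rintro rfl
      exact (Function.invFun_eq (hbij.2 _)).symm
    · intro h
      rw [h, Function.leftInverse_invFun hbij.1]
  apply forall_congr'
  intro k
  apply imp_congr_right; intro hk1
  apply imp_congr_right; intro hk2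
  rw [key]
  unfold Fplus Fminus
  rw [Prod.ext_iff, Prod.ext_iff]
  simp only [funext_iff]
  constructor
  · rintro ⟨h1, h2⟩
    refine ⟨trivial, fun i => ?_, h2.symm⟩
    have := h1 i
    linarith
  · rintro ⟨-, h1, h2⟩
    refine ⟨fun i => ?_, h2.symm⟩
    have := h1 i
    linarith
end
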